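/- Let H̃ ≤ G × G′ be a subdirect product of finite groups G and G′, with projections φ₁ : H̃ → G and φ₂ : H̃ → G′. Let M be a G-lattice with flabby resolution 0 → M → P → F → 0, and let M′ be a G′-lattice with flabby resolution 0 → M′ → P′ → F′ → 0 such that F′ is stably permutation (i.e. [M′]^fl = 0). Regard M ⊕ M′ as an H̃-lattice, where H̃ acts on M through φ₁ and on M′ through φ₂. Then the inflation to H̃ of F ⊕ F′ is a flabby quotient of the H̃-lattice M ⊕ M′ and is similar, as an H̃-lattice, to the inflation of F; hence [M ⊕ M′]^fl = [M]^fl as H̃-lattices. -/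

import Mathlib

/-!
Both operations in the statement preserve flabby resolutions. Inflation along `φ : H →* G`
keeps a permutation basis permuted, and keeps a torsion-free flabby lattice flabby: for
`U ≤ H` the norm of `U` is `|U ∩ ker φ|` times the norm of `φ(U)`, so an element killed by
the former is killed by the latter, and `φ(U)`-augmentation elements are `U`-augmentation
elements. Direct sums of exact sequences, permutation lattices and flabby lattices are again
such. Finally, adding the stably permutation summand `F'` does not change the similarity
class, since `(F ⊕ F') ⊕ Q ≅ F ⊕ Q'`.
-/

/- In this file, a `G`-lattice is encoded as a `Representation ℤ G M` on a ℤ-module `M`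
which is finite and free over `ℤ` (typeclass assumptions `Module.Free ℤ M`,
`Module.Finite ℤ M`). -/

attribute [instance 2000] Prod.instModule Pi.module

/-- The direct sum of two representations of a group `G` over `R`. -/
def prodRep {R G M N : Type} [CommRing R] [Group G]
    [AddCommGroup M] [Module R M] [AddCommGroup N] [Module R N]
    (ρ : Representation R G M) (τ : Representation R G N) :
    Representation R G (M × N) where
  toFun g := LinearMap.prodMap (ρ g) (τ g)
  map_one' := LinearMap.ext fun x => by simp
  map_mul' g h := LinearMap.ext fun x => by simp

/-- Inflation (or restriction) of a representation along a group homomorphism. -/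
def inflRep {R H G M : Type} [CommRing R] [Group H] [Group G]
    [AddCommGroup M] [Module R M]
    (ρ : Representation R G M) (φ : H →* G) : Representation R H M :=
  MonoidHom.comp ρ φ

/-- A permutation lattice: the module has a finite basis permuted by the group action. -/
def IsPermutationRep {R G M : Type} [CommRing R] [Group G] [AddCommGroup M] [Module R M]
    (ρ : Representation R G M) : Prop :=
  ∃ (ι : Type) (_ : Fintype ι) (b : Module.Basis ι R M),
    ∀ (g : G) (i : ι), ∃ j : ι, ρ g (b i) = b j

/-- An equivariant isomorphism between two representations. -/
def RepIso {R G M N : Type} [CommRing R] [Group G] [AddCommGroup M] [Module R M]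
    [AddCommGroup N] [Module R N]
    (ρ : Representation R G M) (τ : Representation R G N) : Prop :=
  ∃ e : M ≃ₗ[R] N, ∀ (g : G) (m : M), e (ρ g m) = τ g (e m)

/-- Flabbiness: the Tate cohomology group `Ĥ⁻¹(H, M)` vanishes for every subgroup `H ≤ G`,
i.e. every element of `M` killed by the norm element of `H` lies in the subgroup
generated by the elements `h • m' - m'` (`h ∈ H`, `m' ∈ M`). -/
def IsFlabbyRep {G M : Type} [Group G] [AddCommGroup M] [Module ℤ M]
    (ρ : Representation ℤ G M) : Prop :=
  ∀ (H : Subgroup G) (m : M),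
    (∑ᶠ h : H, ρ (h : G) m) = 0 →
      m ∈ AddSubgroup.closure {x : M | ∃ (h : H) (m' : M), x = ρ ((h : G)) m' - m'}

/-- Coflabbiness: `H¹(H, M) = 0` for every subgroup `H ≤ G`, i.e. every `1`-cocycle on `H`
with values in `M` is a coboundary. -/
def IsCoflabbyRep {G M : Type} [Group G] [AddCommGroup M] [Module ℤ M]
    (ρ : Representation ℤ G M) : Prop :=
  ∀ (H : Subgroup G) (f : H → M),
    (∀ h₁ h₂ : H, f (h₁ * h₂) = ρ ((h₁ : G)) (f h₂) + f h₁) →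
    ∃ m : M, ∀ x : H, f x = ρ ((x : G)) m - m

/-- Stably permutation: the lattice becomes permutation after adding a permutation lattice. -/
def IsStablyPermutationRep {G M : Type} [Group G] [AddCommGroup M] [Module ℤ M]
    (ρ : Representation ℤ G M) : Prop :=
  ∃ (Q : Type) (_ : AddCommGroup Q) (_ : Module ℤ Q) (σ : Representation ℤ G Q)
    (Q' : Type) (_ : AddCommGroup Q') (_ : Module ℤ Q') (σ' : Representation ℤ G Q'),
    IsPermutationRep σ ∧ IsPermutationRep σ' ∧ RepIso (prodRep ρ σ) σ'

/-- Invertible: the lattice is a direct summand of a permutation lattice. -/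
def IsInvertibleRep {G M : Type} [Group G] [AddCommGroup M] [Module ℤ M]
    (ρ : Representation ℤ G M) : Prop :=
  ∃ (N : Type) (_ : AddCommGroup N) (_ : Module ℤ N) (τ : Representation ℤ G N),
    IsPermutationRep (prodRep ρ τ)

/-- Similarity of lattices: they become isomorphic after adding permutation lattices. -/
def SimilarRep {G M N : Type} [Group G] [AddCommGroup M] [Module ℤ M]
    [AddCommGroup N] [Module ℤ N]
    (ρ : Representation ℤ G M) (τ : Representation ℤ G N) : Prop :=
  ∃ (Q : Type) (_ : AddCommGroup Q) (_ : Module ℤ Q) (σ : Representation ℤ G Q)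
    (Q' : Type) (_ : AddCommGroup Q') (_ : Module ℤ Q') (σ' : Representation ℤ G Q'),
    IsPermutationRep σ ∧ IsPermutationRep σ' ∧ RepIso (prodRep ρ σ) (prodRep τ σ')

/-- A short exact sequence `0 → M → P → F → 0` of `G`-equivariant `ℤ`-linear maps. -/
def IsEquivariantExact {G M P F : Type} [Group G] [AddCommGroup M] [Module ℤ M]
    [AddCommGroup P] [Module ℤ P] [AddCommGroup F] [Module ℤ F]
    (ρM : Representation ℤ G M) (ρP : Representation ℤ G P) (ρF : Representation ℤ G F)
    (i : M →ₗ[ℤ] P) (π : P →ₗ[ℤ] F) : Prop :=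
  Function.Injective i ∧ Function.Surjective π ∧ LinearMap.range i = LinearMap.ker π ∧
  (∀ (g : G) (m : M), i (ρM g m) = ρP g (i m)) ∧
  (∀ (g : G) (x : P), π (ρP g x) = ρF g (π x))

/-- A flabby resolution `0 → M → P → F → 0`: exact and equivariant, `P` a permutation
lattice and `F` flabby. -/
def IsFlabbyResolution {G M P F : Type} [Group G] [AddCommGroup M] [Module ℤ M]
    [AddCommGroup P] [Module ℤ P] [AddCommGroup F] [Module ℤ F]
    (ρM : Representation ℤ G M) (ρP : Representation ℤ G P) (ρF : Representation ℤ G F)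
    (i : M →ₗ[ℤ] P) (π : P →ₗ[ℤ] F) : Prop :=
  IsEquivariantExact ρM ρP ρF i π ∧ IsPermutationRep ρP ∧ IsFlabbyRep ρF

/-- `F` is a flabby quotient of `M`, i.e. it fits into some flabby resolution of `M`;
it then represents the flabby class `[M]^fl`. -/
def IsFlabbyQuotient {G M F : Type} [Group G] [AddCommGroup M] [Module ℤ M]
    [AddCommGroup F] [Module ℤ F]
    (ρM : Representation ℤ G M) (ρF : Representation ℤ G F) : Prop :=
  ∃ (P : Type) (_ : AddCommGroup P) (_ : Module ℤ P)
    (ρP : Representation ℤ G P) (i : M →ₗ[ℤ] P) (π : P →ₗ[ℤ] F),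
    IsFlabbyResolution ρM ρP ρF i π

/-- First projection of a subgroup of `G × G'` (surjective when the subgroup
is a subdirect product). -/
def projFst {G G' : Type} [Group G] [Group G'] (W : Subgroup (G × G')) : ↥W →* G :=
  (MonoidHom.fst G G').comp W.subtype

/-- Second projection of a subgroup of `G × G'`. -/
def projSnd {G G' : Type} [Group G] [Group G'] (W : Subgroup (G × G')) : ↥W →* G' :=
  (MonoidHom.snd G G').comp W.subtype

open Finset in
lemma MonoidHom.sum_comp_of_surjective {A B M : Type} [Group A] [Group B] [Fintype A]
    [Fintype B] [AddCommMonoid M] (ψ : A →* B) (hψ : Function.Surjective ψ) (f : B → M) :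
    ∑ a, f (ψ a) = Nat.card ψ.ker • ∑ b, f b := by
  classical
  have hfiber (b : B) : #{a | ψ a = b} = Nat.card ψ.ker := by
    rw [MonoidHom.card_fiber_eq_of_mem_range ψ (hψ b) ⟨1, map_one ψ⟩, Nat.card_eq_fintype_card,
      ← Fintype.card_subtype]
    exact Fintype.card_congr (Equiv.refl _)
  simp only [Finset.sum_comp f ψ, Finset.image_univ_of_surjective hψ, hfiber, Finset.smul_sum]

section Flabby

variable {H G M N : Type} [Group H] [Group G] [AddCommGroup M] [Module ℤ M]
  [AddCommGroup N] [Module ℤ N]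

@[simp]
lemma prodRep_apply (ρ : Representation ℤ G M) (τ : Representation ℤ G N) (g : G) (x : M × N) :
    prodRep ρ τ g x = (ρ g x.1, τ g x.2) :=
  rfl

@[simp]
lemma inflRep_apply (ρ : Representation ℤ G M) (φ : H →* G) (h : H) :
    inflRep ρ φ h = ρ (φ h) :=
  rfl

lemma IsPermutationRep.inflRep {ρ : Representation ℤ G M} (hρ : IsPermutationRep ρ)
    (φ : H →* G) : IsPermutationRep (inflRep ρ φ) :=
  let ⟨ι, hι, b, hb⟩ := hρ
  ⟨ι, hι, b, fun g => hb (φ g)⟩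

lemma IsPermutationRep.prodRep {ρ : Representation ℤ G M} {τ : Representation ℤ G N}
    (hρ : IsPermutationRep ρ) (hτ : IsPermutationRep τ) : IsPermutationRep (prodRep ρ τ) := by
  obtain ⟨ι, _, b, hb⟩ := hρ
  obtain ⟨κ, _, c, hc⟩ := hτ
  refine ⟨ι ⊕ κ, inferInstance, b.prod c, fun g => ?_⟩
  rintro (i | k)
  · obtain ⟨j, hj⟩ := hb g i
    exact ⟨Sum.inl j, by simp [hj]⟩
  · obtain ⟨j, hj⟩ := hc g k
    exact ⟨Sum.inr j, by simp [hj]⟩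

-- `I_U M`: `IsFlabbyRep ρ` unfolds to `N_U m = 0 → m ∈ augmentationSubgroup ρ U` for all `U`.
def augmentationSubgroup (ρ : Representation ℤ G M) (U : Subgroup G) : AddSubgroup M :=
  AddSubgroup.closure {x : M | ∃ (h : U) (m' : M), x = ρ (h : G) m' - m'}

lemma augmentationSubgroup_le_comap (ρ : Representation ℤ G M) (τ : Representation ℤ G N)
    (f : M →+ N) (hf : ∀ g m, f (ρ g m) = τ g (f m)) (U : Subgroup G) :
    augmentationSubgroup ρ U ≤ (augmentationSubgroup τ U).comap f := by
  refine (AddSubgroup.closure_le _).mpr ?_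
  rintro _ ⟨h, m, rfl⟩
  exact AddSubgroup.subset_closure ⟨h, f m, by rw [map_sub, hf]⟩

lemma augmentationSubgroup_map_le (ρ : Representation ℤ G M) (φ : H →* G) (U : Subgroup H) :
    augmentationSubgroup ρ (U.map φ) ≤ augmentationSubgroup (inflRep ρ φ) U := by
  refine AddSubgroup.closure_mono ?_
  rintro _ ⟨⟨_, u, hu, rfl⟩, m, rfl⟩
  exact ⟨⟨u, hu⟩, m, rfl⟩

lemma IsFlabbyRep.inflRep [Finite H] [IsAddTorsionFree M] {ρ : Representation ℤ G M}
    (hρ : IsFlabbyRep ρ) (φ : H →* G) : IsFlabbyRep (inflRep ρ φ) := by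
  intro U m hm
  have hsurj := φ.subgroupMap_surjective U
  have : Fintype U := Fintype.ofFinite U
  have : Fintype (U.map φ) := @Fintype.ofFinite _ (.of_surjective _ hsurj)
  have hnorm : Nat.card (φ.subgroupMap U).ker • ∑ v : U.map φ, ρ v m = 0 := by
    rw [← MonoidHom.sum_comp_of_surjective _ hsurj (fun v : U.map φ => ρ v m)]
    rwa [finsum_eq_sum_of_fintype] at hm
  refine augmentationSubgroup_map_le ρ φ U (hρ _ m ?_)
  rw [finsum_eq_sum_of_fintype]
  exact (smul_eq_zero.mp hnorm).resolve_left Nat.card_pos.ne'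

lemma IsFlabbyRep.prodRep [Finite G] {ρ : Representation ℤ G M} {τ : Representation ℤ G N}
    (hρ : IsFlabbyRep ρ) (hτ : IsFlabbyRep τ) : IsFlabbyRep (prodRep ρ τ) := by
  intro U x hx
  have hfst := (AddMonoidHom.fst M N).map_finsum (f := fun u : U => _root_.prodRep ρ τ u x)
    (Set.toFinite _)
  have hsnd := (AddMonoidHom.snd M N).map_finsum (f := fun u : U => _root_.prodRep ρ τ u x)
    (Set.toFinite _)
  rw [hx, map_zero] at hfst hsnd
  have hx₁ := augmentationSubgroup_le_comap ρ (_root_.prodRep ρ τ) (LinearMap.inl ℤ M N)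
    (fun g m => by simp) U (hρ U x.1 hfst.symm)
  have hx₂ := augmentationSubgroup_le_comap τ (_root_.prodRep ρ τ) (LinearMap.inr ℤ M N)
    (fun g n => by simp) U (hτ U x.2 hsnd.symm)
  rw [← Prod.fst_add_snd x]
  exact add_mem hx₁ hx₂

end Flabby

section Resolutions

variable {H G M P F M' P' F' : Type} [Group H] [Group G]
  [AddCommGroup M] [Module ℤ M] [AddCommGroup P] [Module ℤ P] [AddCommGroup F] [Module ℤ F]
  [AddCommGroup M'] [Module ℤ M'] [AddCommGroup P'] [Module ℤ P'] [AddCommGroup F'] [Module ℤ F']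
  {ρM : Representation ℤ G M} {ρP : Representation ℤ G P} {ρF : Representation ℤ G F}
  {ρM' : Representation ℤ G M'} {ρP' : Representation ℤ G P'} {ρF' : Representation ℤ G F'}
  {i : M →ₗ[ℤ] P} {π : P →ₗ[ℤ] F} {i' : M' →ₗ[ℤ] P'} {π' : P' →ₗ[ℤ] F'}

lemma IsEquivariantExact.inflRep (h : IsEquivariantExact ρM ρP ρF i π) (φ : H →* G) :
    IsEquivariantExact (inflRep ρM φ) (inflRep ρP φ) (inflRep ρF φ) i π :=
  let ⟨hi, hπ, hexact, hi_comm, hπ_comm⟩ := h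
  ⟨hi, hπ, hexact, fun g => hi_comm (φ g), fun g => hπ_comm (φ g)⟩

lemma IsEquivariantExact.prodMap (h : IsEquivariantExact ρM ρP ρF i π)
    (h' : IsEquivariantExact ρM' ρP' ρF' i' π') :
    IsEquivariantExact (prodRep ρM ρM') (prodRep ρP ρP') (prodRep ρF ρF')
      (i.prodMap i') (π.prodMap π') := by
  obtain ⟨hi, hπ, hexact, hi_comm, hπ_comm⟩ := h
  obtain ⟨hi', hπ', hexact', hi_comm', hπ_comm'⟩ := h'
  refine ⟨?_, ?_, ?_, fun g m => ?_, fun g x => ?_⟩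
  · simpa only [LinearMap.coe_prodMap] using hi.prodMap hi'
  · simpa only [LinearMap.coe_prodMap] using hπ.prodMap hπ'
  · rw [LinearMap.range_prodMap, LinearMap.ker_prodMap, hexact, hexact']
  · simp [hi_comm, hi_comm']
  · simp [hπ_comm, hπ_comm']

lemma IsFlabbyResolution.inflRep [Finite H] [IsAddTorsionFree F]
    (h : IsFlabbyResolution ρM ρP ρF i π) (φ : H →* G) :
    IsFlabbyResolution (inflRep ρM φ) (inflRep ρP φ) (inflRep ρF φ) i π :=
  ⟨h.1.inflRep φ, h.2.1.inflRep φ, h.2.2.inflRep φ⟩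

lemma IsFlabbyResolution.prodMap [Finite G] (h : IsFlabbyResolution ρM ρP ρF i π)
    (h' : IsFlabbyResolution ρM' ρP' ρF' i' π') :
    IsFlabbyResolution (prodRep ρM ρM') (prodRep ρP ρP') (prodRep ρF ρF')
      (i.prodMap i') (π.prodMap π') :=
  ⟨h.1.prodMap h'.1, h.2.1.prodRep h'.2.1, h.2.2.prodRep h'.2.2⟩

end Resolutions

section Similarity

variable {H G M N : Type} [Group H] [Group G] [AddCommGroup M] [Module ℤ M]
  [AddCommGroup N] [Module ℤ N]

lemma IsStablyPermutationRep.inflRep {τ : Representation ℤ G N}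
    (hτ : IsStablyPermutationRep τ) (φ : H →* G) : IsStablyPermutationRep (inflRep τ φ) :=
  let ⟨Q, _, _, σ, Q', _, _, σ', hσ, hσ', e, he⟩ := hτ
  ⟨Q, _, _, _root_.inflRep σ φ, Q', _, _, _root_.inflRep σ' φ, hσ.inflRep φ, hσ'.inflRep φ, e,
    fun g => he (φ g)⟩

lemma IsStablyPermutationRep.similarRep_prodRep {τ : Representation ℤ G N}
    (hτ : IsStablyPermutationRep τ) (ρ : Representation ℤ G M) :
    SimilarRep (prodRep ρ τ) ρ := by
  obtain ⟨Q, _, _, σ, Q', _, _, σ', hσ, hσ', e, he⟩ := hτ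
  refine ⟨Q, _, _, σ, Q', _, _, σ', hσ, hσ',
    (LinearEquiv.prodAssoc ℤ M N Q).trans ((LinearEquiv.refl ℤ M).prodCongr e), fun g x => ?_⟩
  exact Prod.ext rfl (he g (x.1.2, x.2))

end Similarity

theorem subdirect_flabby_class_of_prod_general
    {G G' : Type} [Group G] [Group G'] [Finite G] [Finite G']
    (W : Subgroup (G × G'))
    {M P F M' P' F' : Type}
    [AddCommGroup M] [Module ℤ M]
    [AddCommGroup P] [Module ℤ P]
    [AddCommGroup F] [Module ℤ F] [Module.Free ℤ F]
    [AddCommGroup M'] [Module ℤ M']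
    [AddCommGroup P'] [Module ℤ P']
    [AddCommGroup F'] [Module ℤ F'] [Module.Free ℤ F']
    (ρM : Representation ℤ G M) (ρP : Representation ℤ G P) (ρF : Representation ℤ G F)
    (ρM' : Representation ℤ G' M') (ρP' : Representation ℤ G' P') (ρF' : Representation ℤ G' F')
    (i : M →ₗ[ℤ] P) (π : P →ₗ[ℤ] F) (i' : M' →ₗ[ℤ] P') (π' : P' →ₗ[ℤ] F')
    (hres : IsFlabbyResolution ρM ρP ρF i π)
    (hres' : IsFlabbyResolution ρM' ρP' ρF' i' π')
    (hstab : IsStablyPermutationRep ρF') :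
    IsFlabbyResolution
        (prodRep (inflRep ρM (projFst W)) (inflRep ρM' (projSnd W)))
        (prodRep (inflRep ρP (projFst W)) (inflRep ρP' (projSnd W)))
        (prodRep (inflRep ρF (projFst W)) (inflRep ρF' (projSnd W)))
        (LinearMap.prodMap i i') (LinearMap.prodMap π π') ∧
    SimilarRep
        (prodRep (inflRep ρF (projFst W)) (inflRep ρF' (projSnd W)))
        (inflRep ρF (projFst W)) := by
  have := IsAddTorsionFree.of_isTorsionFree ℤ F
  have := IsAddTorsionFree.of_isTorsionFree ℤ F'
  exact ⟨(hres.inflRep _).prodMap (hres'.inflRep _), (hstab.inflRep _).similarRep_prodRep _⟩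

/-- Let `W ≤ G × G'` be a subdirect product with projections
`φ₁ = projFst W`, `φ₂ = projSnd W`.  Let `0 → M → P → F → 0` be a flabby resolution of a
`G`-lattice `M` and `0 → M' → P' → F' → 0` a flabby resolution of a `G'`-lattice `M'`
with `F'` stably permutation (i.e. `[M']^fl = 0`).  Regard `M ⊕ M'` as a `W`-lattice via
`φ₁` on `M` and `φ₂` on `M'`.  Then the inflation of `F ⊕ F'` is a flabby quotient of the
`W`-lattice `M ⊕ M'` and is similar, as a `W`-lattice, to the inflation of `F`; hence
`[M ⊕ M']^fl = [M]^fl` as `W`-lattices. -/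
theorem subdirect_flabby_class_of_prod
    {G G' : Type} [Group G] [Group G'] [Finite G] [Finite G']
    (W : Subgroup (G × G'))
    (hs₁ : Function.Surjective (projFst W)) (hs₂ : Function.Surjective (projSnd W))
    {M P F M' P' F' : Type}
    [AddCommGroup M] [Module ℤ M] [Module.Free ℤ M] [Module.Finite ℤ M]
    [AddCommGroup P] [Module ℤ P] [Module.Free ℤ P] [Module.Finite ℤ P]
    [AddCommGroup F] [Module ℤ F] [Module.Free ℤ F] [Module.Finite ℤ F]
    [AddCommGroup M'] [Module ℤ M'] [Module.Free ℤ M'] [Module.Finite ℤ M']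
    [AddCommGroup P'] [Module ℤ P'] [Module.Free ℤ P'] [Module.Finite ℤ P']
    [AddCommGroup F'] [Module ℤ F'] [Module.Free ℤ F'] [Module.Finite ℤ F']
    (ρM : Representation ℤ G M) (ρP : Representation ℤ G P) (ρF : Representation ℤ G F)
    (ρM' : Representation ℤ G' M') (ρP' : Representation ℤ G' P') (ρF' : Representation ℤ G' F')
    (i : M →ₗ[ℤ] P) (π : P →ₗ[ℤ] F) (i' : M' →ₗ[ℤ] P') (π' : P' →ₗ[ℤ] F')
    (hres : IsFlabbyResolution ρM ρP ρF i π)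
    (hres' : IsFlabbyResolution ρM' ρP' ρF' i' π')
    (hstab : IsStablyPermutationRep ρF') :
    IsFlabbyResolution
        (prodRep (inflRep ρM (projFst W)) (inflRep ρM' (projSnd W)))
        (prodRep (inflRep ρP (projFst W)) (inflRep ρP' (projSnd W)))
        (prodRep (inflRep ρF (projFst W)) (inflRep ρF' (projSnd W)))
        (LinearMap.prodMap i i') (LinearMap.prodMap π π') ∧
    SimilarRep
        (prodRep (inflRep ρF (projFst W)) (inflRep ρF' (projSnd W)))
        (inflRep ρF (projFst W)) :=
  subdirect_flabby_class_of_prod_general W ρM ρP ρF ρM' ρP' ρF' i π i' π' hres hres' hstab
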